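/- Let T ∈ ℂ^{N_T×N_T} be Hermitian positive semidefinite, let λ > 0, let N_S be a positive integer with N_S ≥ rank(T), and let δ ≥ 0 be the (unique) nonnegative solution of the fixed-point equation δ = (1/N_S)·tr(T·(I_{N_T} + (λ/(1+λδ))·T)^{-1}). Then ρ̄(λ,T,N_S,δ) ≤ log det(I_{N_T} + λ·T), where ρ̄(λ,T,N_S,δ) = log det(I_{N_T} + (λ/(1+λδ))T) + N_S·log(1+λδ) − N_S·λδ/(1+λδ). -/

import Mathlib

open Matrix
open scoped ComplexOrder

/-- The fixed-point equation `δ = (1/N_S)·tr(T·(I + (ρ/(1+ρδ))·T)⁻¹)`. -/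
def FixedPointEq {n : ℕ} (T : Matrix (Fin n) (Fin n) ℂ) (ρ : ℝ) (NS : ℕ) (δ : ℝ) : Prop :=
  (δ : ℂ) = (NS : ℂ)⁻¹ * (T * (1 + ((ρ / (1 + ρ * δ) : ℝ) : ℂ) • T)⁻¹).trace

/-- `ρ̄(λ,T,N_S,δ)`, the closed-form per-eigenvalue sensing mutual information (eq. (7)). -/
noncomputable def rhoBar {n : ℕ} (lam : ℝ) (T : Matrix (Fin n) (Fin n) ℂ)
    (NS : ℕ) (δ : ℝ) : ℝ :=
  Real.log ((1 + ((lam / (1 + lam * δ) : ℝ) : ℂ) • T).det.re)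
    + (NS : ℝ) * Real.log (1 + lam * δ) - (NS : ℝ) * (lam * δ / (1 + lam * δ))

/-! Diagonalise `T`, with eigenvalues `tᵢ ≥ 0`, and put `x = λδ`, `μ = λ/(1+x)`. Each factor
splits as `1 + λtᵢ = (1 + μtᵢ)(1 + x yᵢ)` with `yᵢ = μtᵢ/(1+μtᵢ) ∈ [0,1]`, so
`log det(I + λT) - log det(I + μT) = ∑ log(1 + x yᵢ) ≥ (∑ yᵢ) log(1+x)` by concavity of `log`.
The fixed-point equation says `∑ yᵢ = N_S x/(1+x)`, and what remains,
`log(1+x) - x/(1+x) ≤ x/(1+x) · log(1+x)`, is `log(1+x) ≤ x`. -/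

namespace Matrix
variable {n 𝕜 : Type*} [Fintype n] [DecidableEq n] [RCLike 𝕜] {A : Matrix n n 𝕜}

namespace IsHermitian

theorem det_cfc (hA : A.IsHermitian) (f : ℝ → ℝ) :
    (cfc f A).det = ∏ i, (f (hA.eigenvalues i) : 𝕜) := by
  simp [hA.cfc_eq, IsHermitian.cfc, -Unitary.conjStarAlgAut_apply]

theorem trace_cfc (hA : A.IsHermitian) (f : ℝ → ℝ) :
    (cfc f A).trace = ∑ i, (f (hA.eigenvalues i) : 𝕜) := by
  rw [hA.cfc_eq, IsHermitian.cfc, Unitary.conjStarAlgAut_apply, trace_mul_cycle,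
    Unitary.coe_star_mul_self, one_mul, trace_diagonal]
  rfl

theorem one_add_smul_eq_cfc (hA : A.IsHermitian) (c : ℝ) :
    1 + (c : 𝕜) • A = cfc (fun x => 1 + c * x) A := by
  rw [cfc_const_add 1 (c * ·) A, cfc_const_mul_id c A hA.isSelfAdjoint, map_one,
    RCLike.real_smul_eq_coe_smul (K := 𝕜)]

theorem det_one_add_smul (hA : A.IsHermitian) (c : ℝ) :
    (1 + (c : 𝕜) • A).det = ∏ i, ((1 + c * hA.eigenvalues i : ℝ) : 𝕜) := by
  rw [hA.one_add_smul_eq_cfc, hA.det_cfc]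

theorem trace_mul_inv_one_add_smul (hA : A.IsHermitian) {c : ℝ}
    (hc : ∀ i, 1 + c * hA.eigenvalues i ≠ 0) :
    (A * (1 + (c : 𝕜) • A)⁻¹).trace
      = ∑ i, ((hA.eigenvalues i / (1 + c * hA.eigenvalues i) : ℝ) : 𝕜) := by
  have hspec : ∀ x ∈ spectrum ℝ A, 1 + c * x ≠ 0 := by
    rintro _ hx
    obtain ⟨i, rfl⟩ := hA.spectrum_real_eq_range_eigenvalues ▸ hx
    exact hc i
  have hdiv := cfc_map_div (fun x => x) (fun x => 1 + c * x) A hspec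
  rw [cfc_id' ℝ A hA.isSelfAdjoint] at hdiv
  rw [hA.one_add_smul_eq_cfc, nonsing_inv_eq_ringInverse, ← hdiv, hA.trace_cfc]

end IsHermitian

namespace PosSemidef

theorem log_re_det_one_add_smul (hA : A.PosSemidef) {c : ℝ} (hc : 0 ≤ c) :
    Real.log (RCLike.re (1 + (c : 𝕜) • A).det)
      = ∑ i, Real.log (1 + c * hA.isHermitian.eigenvalues i) := by
  rw [hA.isHermitian.det_one_add_smul, ← RCLike.ofReal_prod, RCLike.ofReal_re, Real.log_prod]
  intro i _
  have := hA.eigenvalues_nonneg i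
  positivity

end PosSemidef
end Matrix

namespace Real

theorem mul_log_one_add_le_log_one_add_mul {x y : ℝ} (hx : 0 ≤ x) (hy₀ : 0 ≤ y) (hy₁ : y ≤ 1) :
    y * log (1 + x) ≤ log (1 + x * y) := by
  rw [← log_rpow (by linarith), mul_comm x]
  exact log_le_log (by positivity) (rpow_one_add_le_one_add_mul_self (by linarith) hy₀ hy₁)

theorem log_one_add_sub_div_le {x : ℝ} (hx : 0 ≤ x) :
    log (1 + x) - x / (1 + x) ≤ x / (1 + x) * log (1 + x) := by
  have hlog : log (1 + x) ≤ x := by linarith [log_le_sub_one_of_pos (by linarith : 0 < 1 + x)]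
  have key : log (1 + x) - x / (1 + x) - x / (1 + x) * log (1 + x)
      = (log (1 + x) - x) / (1 + x) := by
    field_simp
    ring
  rw [← sub_nonpos, key]
  exact div_nonpos_of_nonpos_of_nonneg (by linarith) (by linarith)

end Real

open Real in
theorem eigen_rhoBar_le_sum_log_one_add_mul {ι : Type*} [Fintype ι] {t : ι → ℝ} (ht : ∀ i, 0 ≤ t i)
    {lam δ N : ℝ} (hlam : 0 ≤ lam) (hδ : 0 ≤ δ) (hN : 0 ≤ N)
    (hfix : N * δ ≤ ∑ i, t i / (1 + lam / (1 + lam * δ) * t i)) :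
    ∑ i, log (1 + lam / (1 + lam * δ) * t i) + N * log (1 + lam * δ)
        - N * (lam * δ / (1 + lam * δ))
      ≤ ∑ i, log (1 + lam * t i) := by
  set x := lam * δ with hx_def
  have hx : 0 ≤ x := mul_nonneg hlam hδ
  set μ := lam / (1 + x) with hμ_def
  have hμ : 0 ≤ μ := by positivity
  have hμt : ∀ i, 0 < 1 + μ * t i := fun i => by have := ht i; positivity
  set y : ι → ℝ := fun i => μ * t i / (1 + μ * t i)
  have hy₀ : ∀ i, 0 ≤ y i := fun i => by have := ht i; positivity
  have hy₁ : ∀ i, y i ≤ 1 := fun i => by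
    rw [div_le_one (hμt i)]; linarith
  have hsplit : ∀ i, log (1 + lam * t i) = log (1 + μ * t i) + log (1 + x * y i) := by
    intro i
    have hfactor : 1 + lam * t i = (1 + μ * t i) * (1 + x * y i) := by
      have hy : y i * (1 + μ * t i) = μ * t i := div_mul_cancel₀ _ (hμt i).ne'
      have hμx : μ * (1 + x) = lam := div_mul_cancel₀ _ (by positivity)
      linear_combination (-x) * hy - t i * hμx
    rw [hfactor, log_mul (hμt i).ne' (by nlinarith [hy₀ i])]
  have hchord : N * (x / (1 + x)) * log (1 + x) ≤ ∑ i, log (1 + x * y i) :=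
    calc N * (x / (1 + x)) * log (1 + x) = μ * (N * δ) * log (1 + x) := by
          rw [hμ_def, hx_def]; ring
      _ ≤ μ * (∑ i, t i / (1 + μ * t i)) * log (1 + x) := by
          gcongr
          exact log_nonneg (by linarith)
      _ = ∑ i, y i * log (1 + x) := by
          rw [Finset.mul_sum, Finset.sum_mul]
          refine Finset.sum_congr rfl fun i _ => ?_
          simp only [y]; ring
      _ ≤ ∑ i, log (1 + x * y i) :=
          Finset.sum_le_sum fun i _ => mul_log_one_add_le_log_one_add_mul hx (hy₀ i) (hy₁ i)
  have hgap := mul_le_mul_of_nonneg_left (log_one_add_sub_div_le hx) hN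
  rw [Finset.sum_congr rfl fun i _ => hsplit i, Finset.sum_add_distrib]
  nlinarith

theorem FixedPointEq.natCast_mul_eq_sum {n : ℕ} {T : Matrix (Fin n) (Fin n) ℂ}
    (hT : T.PosSemidef) {ρ δ : ℝ} (hρ : 0 ≤ ρ) (hδ : 0 ≤ δ) {NS : ℕ} (hNS : NS ≠ 0)
    (h : FixedPointEq T ρ NS δ) :
    NS * δ = ∑ i, hT.isHermitian.eigenvalues i
      / (1 + ρ / (1 + ρ * δ) * hT.isHermitian.eigenvalues i) := by
  set t := hT.isHermitian.eigenvalues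
  have hpos : ∀ i, 0 < 1 + ρ / (1 + ρ * δ) * t i := fun i => by
    have := hT.eigenvalues_nonneg i
    have : 0 ≤ ρ * δ := mul_nonneg hρ hδ
    positivity
  have htrace := hT.isHermitian.trace_mul_inv_one_add_smul (𝕜 := ℂ) fun i => (hpos i).ne'
  have hreal : δ = (NS : ℝ)⁻¹ * ∑ i, t i / (1 + ρ / (1 + ρ * δ) * t i) := by
    have hcomplex : (δ : ℂ) = (((NS : ℝ)⁻¹ * ∑ i, t i / (1 + ρ / (1 + ρ * δ) * t i) : ℝ) : ℂ) := by
      rw [Complex.ofReal_mul, Complex.ofReal_inv, Complex.ofReal_natCast, Complex.ofReal_sum]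
      exact h.trans (congrArg _ htrace)
    exact_mod_cast hcomplex
  nth_rewrite 1 [hreal]
  exact mul_inv_cancel_left₀ (Nat.cast_ne_zero.mpr hNS) _

theorem rhoBar_le_logDet_general {NT : ℕ} (T : Matrix (Fin NT) (Fin NT) ℂ) (hT : T.PosSemidef)
    (lam : ℝ) (hlam : 0 < lam) (NS : ℕ) (hNS1 : 1 ≤ NS)
    (δ : ℝ) (hδ : 0 ≤ δ) (hfix : FixedPointEq T lam NS δ) :
    rhoBar lam T NS δ ≤ Real.log ((1 + ((lam : ℝ) : ℂ) • T).det.re) := by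
  have hμ : 0 ≤ lam / (1 + lam * δ) := by
    have : 0 ≤ lam * δ := mul_nonneg hlam.le hδ
    positivity
  have key := eigen_rhoBar_le_sum_log_one_add_mul hT.eigenvalues_nonneg hlam.le hδ
    NS.cast_nonneg (hfix.natCast_mul_eq_sum hT hlam.le hδ (by omega)).le
  rwa [← hT.log_re_det_one_add_smul (𝕜 := ℂ) hμ,
    ← hT.log_re_det_one_add_smul (𝕜 := ℂ) hlam.le] at key

/-- **ρ̄ never exceeds the deterministic-signal term** `log det(I + λT)` (the Jensen upper
bound (5) of the paper, per eigenvalue). -/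
theorem rhoBar_le_logDet {NT : ℕ} (T : Matrix (Fin NT) (Fin NT) ℂ) (hT : T.PosSemidef)
    (lam : ℝ) (hlam : 0 < lam) (NS : ℕ) (hNS1 : 1 ≤ NS) (hNSr : T.rank ≤ NS)
    (δ : ℝ) (hδ : 0 ≤ δ) (hfix : FixedPointEq T lam NS δ) :
    rhoBar lam T NS δ ≤ Real.log ((1 + ((lam : ℝ) : ℂ) • T).det.re) :=
  rhoBar_le_logDet_general T hT lam hlam NS hNS1 δ hδ hfix
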